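/- arXiv:2403.18450 — 4 statements merged into one kernel-verified Lean document; each statement's English description precedes it below -/
import Mathlib

section
/- Let k be a commutative ring with unit, T := T(x_i : i ∈ N) the free associative unital k-algebra on a family of generators indexed by a set N, ε : T → k its augmentation, and let (r_j)_{j∈M} be a family of elements of ker ε. Let A := T/(r_j : j ∈ M) be the quotient by the two-sided ideal generated by the r_j, with projection π : T → A and induced augmentation ε_A : A → k (which exists since the ideal lies in ker ε). Write each r_j = Σ_{i∈N} r_{ji}·x_i with r_{ji} ∈ T, all but finitely many zero (such a decomposition exists and is unique because ε(r_j) = 0). Then the sequence of left A-modules A^{(M)} →d₂→ A^{(N)} →d₁→ A →ε_A→ k → 0 is exact at A^{(N)}, at A, and at k, where d₂ is the A-linear map sending the j-th basis vector to Σ_{i∈N} π(r_{ji})·e_i, and d₁ is the A-linear map sending the i-th basis vector e_i to π(x_i). -/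
universe u

/-- The augmentation of the free (tensor) algebra, sending every generator to `0`. -/
noncomputable def freeAug (k : Type u) [CommRing k] (S : Type u) :
    FreeAlgebra k S →ₐ[k] k :=
  FreeAlgebra.lift k (fun _ : S => (0 : k))

/-- The relation whose `RingQuot` is the quotient of `T(x_i : i ∈ S)` by the two-sided ideal
generated by the elements `r j`. -/
def quotRel {k : Type u} [CommRing k] {S : Type u} {M : Type v} (r : M → FreeAlgebra k S) :
    FreeAlgebra k S → FreeAlgebra k S → Prop :=
  fun a b => ∃ j : M, a = r j ∧ b = 0


section Dmon
variable (k : Type u) [CommRing k] (N : Type u)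

/-- auxiliary: value of the deconcatenation map on a basis word, given its reversed letter list -/
noncomputable def dAuxList : List N → (k →ₗ[k] (N →₀ MonoidAlgebra k (FreeMonoid N)))
  | [] => 0
  | i :: l => (Finsupp.lsingle i).comp
      ((MonoidAlgebra.lsingle (FreeMonoid.ofList l.reverse)) : k →ₗ[k] MonoidAlgebra k (FreeMonoid N))

noncomputable def dAux (w : FreeMonoid N) : k →ₗ[k] (N →₀ MonoidAlgebra k (FreeMonoid N)) :=
  dAuxList k N (FreeMonoid.toList w).reverse

/-- the "right deconcatenation" linear map on the monoid algebra -/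
noncomputable def Dmon : MonoidAlgebra k (FreeMonoid N) →ₗ[k] (N →₀ MonoidAlgebra k (FreeMonoid N)) :=
  (Finsupp.lsum k (dAux k N)).comp (MonoidAlgebra.coeffLinearEquiv k).toLinearMap

lemma Dmon_single (w : FreeMonoid N) (c : k) :
    Dmon k N (MonoidAlgebra.single w c) = dAux k N w c :=
  Finsupp.lsum_single k (dAux k N) w c

lemma dAux_one : dAux k N 1 = 0 := by
  simp [dAux, dAuxList]

lemma dAux_mul (w : FreeMonoid N) (i : N) :
    dAux k N (w * FreeMonoid.of i) =
      (Finsupp.lsingle i).comp ((MonoidAlgebra.lsingle w) : k →ₗ[k] MonoidAlgebra k (FreeMonoid N)) := by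
  simp [dAux, dAuxList]

lemma Dmon_mul_X (t : MonoidAlgebra k (FreeMonoid N)) (i : N) :
    Dmon k N (t * MonoidAlgebra.single (FreeMonoid.of i) 1) = Finsupp.single i t := by
  induction t using MonoidAlgebra.induction_linear with
  | zero => simp
  | add a b ha hb => rw [add_mul, map_add, ha, hb, ← Finsupp.single_add]
  | single w c =>
      rw [
        MonoidAlgebra.single_mul_single, mul_one, Dmon_single, dAux_mul]
      rfl

lemma Dmon_algebraMap (c : k) :
    Dmon k N (algebraMap k (MonoidAlgebra k (FreeMonoid N)) c) = 0 := by
  rw [show (algebraMap k (MonoidAlgebra k (FreeMonoid N)) c) = MonoidAlgebra.single 1 c from rfl,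
    Dmon_single, dAux_one]
  rfl

end Dmon

section Dfa
variable (k : Type u) [CommRing k] (N : Type u)

noncomputable def eFM := FreeAlgebra.equivMonoidAlgebraFreeMonoid (R := k) (X := N)

lemma eFM_ι (i : N) : eFM k N (FreeAlgebra.ι k i) = MonoidAlgebra.single (FreeMonoid.of i) 1 := by
  simp [eFM, FreeAlgebra.equivMonoidAlgebraFreeMonoid, FreeAlgebra.lift_ι_apply,
    MonoidAlgebra.of_apply]

noncomputable def Dfa : FreeAlgebra k N →ₗ[k] (N →₀ FreeAlgebra k N) :=
  (Finsupp.mapRange.linearMap (eFM k N).symm.toLinearMap).comp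
    ((Dmon k N).comp (eFM k N).toLinearMap)

/-- the map `(c_i) ↦ Σ c_i * x_i` -/
noncomputable def Sx : (N →₀ FreeAlgebra k N) →ₗ[k] FreeAlgebra k N :=
  Finsupp.lsum k fun i => LinearMap.mulRight k (FreeAlgebra.ι k i)

lemma Sx_apply (c : N →₀ FreeAlgebra k N) :
    Sx k N c = c.sum fun i a => a * FreeAlgebra.ι k i := rfl

lemma Sx_single (i : N) (a : FreeAlgebra k N) :
    Sx k N (Finsupp.single i a) = a * FreeAlgebra.ι k i := by
  simp [Sx]

lemma Dfa_mul_ι (t : FreeAlgebra k N) (i : N) :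
    Dfa k N (t * FreeAlgebra.ι k i) = Finsupp.single i t := by
  simp only [Dfa, LinearMap.comp_apply, AlgEquiv.toLinearMap_apply, map_mul, eFM_ι,
    Dmon_mul_X, Finsupp.mapRange.linearMap_apply, Finsupp.mapRange_single,
    AlgEquiv.toLinearMap_apply]
  simp

lemma Dfa_algebraMap (c : k) : Dfa k N (algebraMap k (FreeAlgebra k N) c) = 0 := by
  simp only [Dfa, LinearMap.comp_apply, AlgEquiv.toLinearMap_apply, AlgEquiv.commutes,
    Dmon_algebraMap, map_zero]

lemma Dfa_Sx (c : N →₀ FreeAlgebra k N) : Dfa k N (Sx k N c) = c := by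
  rw [Sx_apply, map_finsuppSum]
  simp only [Dfa_mul_ι]
  exact Finsupp.sum_single c

lemma mul_Sx (a : FreeAlgebra k N) (g : N →₀ FreeAlgebra k N) :
    a * Sx k N g =
      Sx k N (Finsupp.mapRange.linearMap (LinearMap.mulLeft k a) g) := by
  induction g using Finsupp.induction_linear with
  | zero => simp
  | add f g hf hg => simp only [map_add, mul_add, hf, hg]
  | single i s =>
      rw [Sx_single, Finsupp.mapRange.linearMap_apply, Finsupp.mapRange_single,
        Sx_single, LinearMap.mulLeft_apply, mul_assoc]

lemma freeAug_ι (i : N) : freeAug k N (FreeAlgebra.ι k i) = 0 :=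
  FreeAlgebra.lift_ι_apply _ _

lemma Dfa_decomp (t : FreeAlgebra k N) :
    t = algebraMap k (FreeAlgebra k N) (freeAug k N t) + Sx k N (Dfa k N t) := by
  induction t with
  | grade0 c => simp [Dfa_algebraMap, AlgHom.commutes]
  | grade1 i =>
      have h1 : Dfa k N (FreeAlgebra.ι k i) = Finsupp.single i 1 := by
        rw [← one_mul (FreeAlgebra.ι k i), Dfa_mul_ι]
      rw [freeAug_ι, h1, Sx_single, map_zero, one_mul, zero_add]
  | add a b ha hb =>
      rw [map_add, map_add, map_add, map_add]
      conv_lhs => rw [ha, hb]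
      abel
  | mul a b ha hb =>
      set α := freeAug k N a with hα
      set β := freeAug k N b with hβ
      have hb2 : a * b = β • a +
          Sx k N (Finsupp.mapRange.linearMap (LinearMap.mulLeft k a) (Dfa k N b)) := by
        conv_lhs => rw [hb]
        rw [mul_add, mul_Sx]
        congr 1
        rw [Algebra.smul_def, Algebra.commutes]
      have hDab : Dfa k N (a * b) =
          β • Dfa k N a + Finsupp.mapRange.linearMap (LinearMap.mulLeft k a) (Dfa k N b) := by
        rw [hb2, map_add, map_smul, Dfa_Sx]
      rw [map_mul, hDab, map_add, map_smul, ← hα, ← hβ, hb2]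
      have key : β • a = algebraMap k (FreeAlgebra k N) (α * β) + β • Sx k N (Dfa k N a) := by
        conv_lhs => rw [ha]
        rw [smul_add]
        congr 1
        rw [Algebra.smul_def, ← map_mul, mul_comm]
      rw [key]
      abel

lemma Dfa_mul (a c : FreeAlgebra k N) :
    Dfa k N (a * c) = freeAug k N c • Dfa k N a +
      Finsupp.mapRange.linearMap (LinearMap.mulLeft k a) (Dfa k N c) := by
  have h : a * c = freeAug k N c • a +
      Sx k N (Finsupp.mapRange.linearMap (LinearMap.mulLeft k a) (Dfa k N c)) := by
    conv_lhs => rw [Dfa_decomp k N c]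
    rw [mul_add, mul_Sx]
    congr 1
    rw [Algebra.smul_def, Algebra.commutes]
  rw [h, map_add, map_smul, Dfa_Sx]

end Dfa

section Helpers
variable {R : Type u} [CommRing R] {ι : Type*} {M P : Type*} [AddCommMonoid M] [Module R M]
  [AddCommMonoid P] [Module R P]

lemma mapRange_linearMap_eq_sum (f : M →ₗ[R] P) (g : ι →₀ M) :
    Finsupp.mapRange.linearMap f g = g.sum fun i t => Finsupp.single i (f t) := by
  induction g using Finsupp.induction_linear with
  | zero => simp
  | add a b ha hb =>
      rw [map_add, ha, hb,
        Finsupp.sum_add_index' (fun i => by simp) (fun i b₁ b₂ => by rw [map_add, Finsupp.single_add])]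
  | single i t => simp

end Helpers

/-- Let `T = T(x_i : i ∈ N)` be the free associative `k`-algebra with
augmentation `ε`, let `(r_j)_{j ∈ M}` be elements of `ker ε`, let `A = T/(r_j : j ∈ M)` with
projection `π` and induced augmentation `εA`, and write `r_j = Σ_i r_{ji}·x_i`.  Then the
sequence of left `A`-modules `A^{(M)} → A^{(N)} → A → k → 0`, with `d₂` sending the `j`-th
basis vector to `Σ_i π(r_{ji})·e_i` and `d₁` sending `e_i` to `π(x_i)`, is exact at
`A^{(N)}`, at `A`, and at `k`. -/
theorem presentation_exact_sequence (k : Type u) [CommRing k] (N M : Type u)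
    (r : M → FreeAlgebra k N) (hr : ∀ j, freeAug k N (r j) = 0)
    (π : FreeAlgebra k N →ₐ[k] RingQuot (quotRel r))
    (hπ : π = RingQuot.mkAlgHom k (quotRel r))
    (εA : RingQuot (quotRel r) →ₐ[k] k)
    (hεA : εA.comp π = freeAug k N)
    (rji : M → (N →₀ FreeAlgebra k N))
    (hrji : ∀ j, r j = (rji j).sum fun i t => t * FreeAlgebra.ι k i)
    (d1 : (N →₀ RingQuot (quotRel r)) →ₗ[RingQuot (quotRel r)] RingQuot (quotRel r))
    (hd1 : ∀ i, d1 (Finsupp.single i 1) = π (FreeAlgebra.ι k i))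
    (d2 : (M →₀ RingQuot (quotRel r)) →ₗ[RingQuot (quotRel r)]
            (N →₀ RingQuot (quotRel r)))
    (hd2 : ∀ j, d2 (Finsupp.single j 1) = (rji j).sum fun i t => Finsupp.single i (π t)) :
    LinearMap.range d2 = LinearMap.ker d1 ∧
    (∀ a : RingQuot (quotRel r), εA a = 0 ↔ a ∈ LinearMap.range d1) ∧
    Function.Surjective εA := by
  classical
  -- the componentwise projection
  set PM : (N →₀ FreeAlgebra k N) →ₗ[k] (N →₀ RingQuot (quotRel r)) := Finsupp.mapRange.linearMap π.toLinearMap with hPMdef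
  have hPM : ∀ g : N →₀ FreeAlgebra k N, PM g = g.sum fun i t => Finsupp.single i (π t) := fun g =>
    mapRange_linearMap_eq_sum π.toLinearMap g
  have hPM' : ∀ (g : N →₀ FreeAlgebra k N) (i : N), PM g i = π (g i) := fun g i => by
    simp [hPMdef, Finsupp.mapRange_apply]
  have hπs : Function.Surjective π := by
    rw [hπ]; exact RingQuot.mkAlgHom_surjective k _
  have hπr : ∀ j, π (r j) = 0 := by
    intro j
    rw [hπ]
    have h0 : RingQuot.mkAlgHom k (quotRel r) (r j) = RingQuot.mkAlgHom k (quotRel r) 0 :=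
      RingQuot.mkAlgHom_rel k ⟨j, rfl, rfl⟩
    simpa using h0
  -- εA ∘ π = freeAug pointwise
  have hπaug : ∀ t : FreeAlgebra k N, εA (π t) = freeAug k N t := fun t => by
    rw [← hεA]; rfl
  -- d1 on mapRange
  have hd1PM : ∀ g : N →₀ FreeAlgebra k N, d1 (PM g) = π (Sx k N g) := by
    intro g
    rw [hPM, map_finsuppSum, Sx_apply, map_finsuppSum]
    refine Finsupp.sum_congr fun i _ => ?_
    rw [← Finsupp.smul_single_one i (π (g i)), map_smul, hd1, smul_eq_mul, map_mul]
  have hd2PM : ∀ j, d2 (Finsupp.single j 1) = PM (rji j) := by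
    intro j; rw [hd2, hPM]
  -- the equivalence generated by the relation
  have hquot : ∀ a b : FreeAlgebra k N, π a = π b → Relation.EqvGen (RingQuot.Rel (quotRel r)) a b := by
    intro a b h
    rw [hπ] at h
    have h' : RingQuot.mkRingHom (quotRel r) a = RingQuot.mkRingHom (quotRel r) b := by
      rw [← RingQuot.mkAlgHom_coe k]; exact_mod_cast h
    rw [RingQuot.mkRingHom_def] at h'
    simp only [RingHom.coe_mk, MonoidHom.coe_mk, OneHom.coe_mk] at h'
    exact Quot.eq.1 (congrArg RingQuot.toQuot h')
  -- the crux: elements of the kernel of π have coefficient vectors in the range of d2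
  have crux : ∀ a b : FreeAlgebra k N, Relation.EqvGen (RingQuot.Rel (quotRel r)) a b →
      π a = π b ∧ PM (Dfa k N a - Dfa k N b) ∈ LinearMap.range d2 := by
    intro a b h
    induction h with
    | refl a => exact ⟨rfl, by simp⟩
    | symm a b h ih =>
        refine ⟨ih.1.symm, ?_⟩
        have : Dfa k N b - Dfa k N a = -(Dfa k N a - Dfa k N b) := by abel
        rw [this, map_neg]
        exact Submodule.neg_mem (R := RingQuot (quotRel r)) (M := N →₀ RingQuot (quotRel r)) _ ih.2
    | trans a b c hab hbc ih1 ih2 =>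
        refine ⟨ih1.1.trans ih2.1, ?_⟩
        have : Dfa k N a - Dfa k N c = (Dfa k N a - Dfa k N b) + (Dfa k N b - Dfa k N c) := by abel
        rw [this, map_add]
        exact Submodule.add_mem (R := RingQuot (quotRel r)) (M := N →₀ RingQuot (quotRel r)) _ ih1.2 ih2.2
    | rel a b hab =>
        induction hab with
        | of h =>
            obtain ⟨j, rfl, rfl⟩ := h
            refine ⟨by rw [hπr, map_zero], ?_⟩
            have hD : Dfa k N (r j) = rji j := by
              rw [hrji j, ← Sx_apply, Dfa_Sx]
            rw [map_zero, sub_zero, hD]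
            exact ⟨Finsupp.single j 1, (hd2PM j)⟩
        | @add_left a b c h ih =>
            refine ⟨by rw [map_add, map_add, ih.1], ?_⟩
            have : Dfa k N (a + c) - Dfa k N (b + c) = Dfa k N a - Dfa k N b := by
              rw [map_add, map_add]; abel
            rw [this]; exact ih.2
        | @mul_left a b c h ih =>
            refine ⟨by rw [map_mul, map_mul, ih.1], ?_⟩
            have hsub : Dfa k N (a * c) - Dfa k N (b * c) =
                freeAug k N c • (Dfa k N a - Dfa k N b) +
                  Finsupp.mapRange.linearMap (LinearMap.mulLeft k (a - b)) (Dfa k N c) := by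
              rw [Dfa_mul, Dfa_mul, smul_sub]
              have : Finsupp.mapRange.linearMap (LinearMap.mulLeft k (a - b)) (Dfa k N c) =
                  Finsupp.mapRange.linearMap (LinearMap.mulLeft k a) (Dfa k N c) -
                  Finsupp.mapRange.linearMap (LinearMap.mulLeft k b) (Dfa k N c) := by
                ext i
                simp [Finsupp.mapRange_apply, sub_mul]
              rw [this]
              abel
            rw [hsub, map_add, map_smul]
            have hY : PM (Finsupp.mapRange.linearMap (LinearMap.mulLeft k (a - b))
                (Dfa k N c)) = 0 := by
              ext i
              rw [hPM']
              simp only [Finsupp.mapRange.linearMap_apply, Finsupp.mapRange_apply,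
                LinearMap.mulLeft_apply, Finsupp.coe_zero, Pi.zero_apply]
              rw [map_mul, map_sub, ih.1, sub_self, zero_mul]
            rw [hY, add_zero]
            exact Submodule.smul_of_tower_mem (R := RingQuot (quotRel r)) (M := N →₀ RingQuot (quotRel r)) (S := k) _ _ ih.2
        | @mul_right a b c h ih =>
            refine ⟨by rw [map_mul, map_mul, ih.1], ?_⟩
            have haug : freeAug k N b = freeAug k N c := by
              rw [← hπaug, ← hπaug, ih.1]
            have hsub : Dfa k N (a * b) - Dfa k N (a * c) =
                Finsupp.mapRange.linearMap (LinearMap.mulLeft k a)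
                  (Dfa k N b - Dfa k N c) := by
              rw [Dfa_mul, Dfa_mul, haug, map_sub]
              abel
            rw [hsub]
            have h2 : PM (Finsupp.mapRange.linearMap (LinearMap.mulLeft k a)
                (Dfa k N b - Dfa k N c)) = π a • PM (Dfa k N b - Dfa k N c) := by
              ext i
              rw [hPM', Finsupp.smul_apply, hPM']
              simp only [Finsupp.mapRange.linearMap_apply, Finsupp.mapRange_apply,
                LinearMap.mulLeft_apply]
              rw [map_mul, smul_eq_mul]
            rw [h2]
            exact Submodule.smul_mem (R := RingQuot (quotRel r)) (M := N →₀ RingQuot (quotRel r)) _ _ ih.2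
  constructor
  · -- range d2 = ker d1
    apply le_antisymm
    · rintro x ⟨y, rfl⟩
      rw [LinearMap.mem_ker]
      have : ∀ y, d1 (d2 y) = 0 := by
        intro y
        conv_lhs => rw [← Finsupp.sum_single y, map_finsuppSum, map_finsuppSum]
        refine Finset.sum_eq_zero fun j _ => ?_
        show d1 (d2 (Finsupp.single j (y j))) = 0
        rw [← Finsupp.smul_single_one j (y j), map_smul, map_smul, hd2PM, hd1PM]
        have hSr : Sx k N (rji j) = r j := by rw [Sx_apply, ← hrji]
        rw [hSr, hπr, smul_zero]
      exact this y
    · intro f hf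
      rw [LinearMap.mem_ker] at hf
      obtain ⟨σ, hσ⟩ := hπs.hasRightInverse
      set σ' : RingQuot (quotRel r) → FreeAlgebra k N := fun a => if a = 0 then 0 else σ a with hσ'def
      have hσ'0 : σ' 0 = 0 := by simp [hσ'def]
      have hσ' : ∀ a, π (σ' a) = a := by
        intro a
        by_cases h : a = 0
        · simp [hσ'def, h]
        · simp [hσ'def, h, hσ a]
      set g : N →₀ FreeAlgebra k N := Finsupp.mapRange σ' hσ'0 f with hg
      have hPMg : PM g = f := by
        ext i
        rw [hPM' g i, hg, Finsupp.mapRange_apply, hσ']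
      have hw : π (Sx k N g) = 0 := by rw [← hd1PM, hPMg, hf]
      have h := (crux (Sx k N g) 0 (hquot _ _ (by rw [hw, map_zero]))).2
      rw [map_zero, sub_zero, Dfa_Sx, hPMg] at h
      exact h
  constructor
  · -- exactness at A
    intro a
    constructor
    · intro ha
      obtain ⟨t, rfl⟩ := hπs a
      have haug : freeAug k N t = 0 := by rw [← hπaug, ha]
      have ht : t = Sx k N (Dfa k N t) := by
        conv_lhs => rw [Dfa_decomp k N t]
        rw [haug, map_zero, zero_add]
      exact ⟨PM (Dfa k N t), by rw [hd1PM, ← ht]⟩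
    · rintro ⟨f, rfl⟩
      conv_lhs => rw [← Finsupp.sum_single f, map_finsuppSum, map_finsuppSum]
      refine Finset.sum_eq_zero fun i _ => ?_
      show εA (d1 (Finsupp.single i (f i))) = 0
      rw [← Finsupp.smul_single_one i (f i), map_smul, hd1, smul_eq_mul, map_mul, hπaug,
        freeAug_ι, mul_zero]
  · -- surjectivity of εA
    intro c
    exact ⟨algebraMap k (RingQuot (quotRel r)) c, by simp [εA.commutes c]⟩
end

section
/- Let k be a principal ideal domain and M a k-module. Suppose there is an exact sequence of k-modules k^A → k^B → M → 0 with A and B finite natural numbers. Then A ≥ rel(M) and B ≥ gen(M). -/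
universe u v

/-- `gen M`: the minimal number of elements generating the `k`-module `M`. -/
noncomputable def mgen (k : Type u) (M : Type v) [CommRing k] [AddCommGroup M]
    [Module k M] : ℕ :=
  sInf {n : ℕ | ∃ s : Fin n → M, Submodule.span k (Set.range s) = ⊤}

/-- `rel M`: the number of nonzero invariant factors of a finitely generated module `M`
over a PID, i.e. the minimal number of generators of its torsion submodule. -/
noncomputable def mrel (k : Type u) (M : Type v) [CommRing k] [AddCommGroup M]
    [Module k M] : ℕ :=
  mgen k ↥(Submodule.torsion k M)

/-- Scaling a linearly independent family by nonzero scalars over a domain preserves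
linear independence. -/
lemma smul_linearIndependent {k : Type u} {V : Type v} [CommRing k] [IsDomain k]
    [AddCommGroup V] [Module k V] {ι : Type*} {v : ι → V} (hv : LinearIndependent k v)
    (c : ι → k) (hc : ∀ i, c i ≠ 0) : LinearIndependent k (fun i => c i • v i) := by
  rw [linearIndependent_iff'] at hv ⊢
  intro s g hsum i hi
  have h0 : ∑ j ∈ s, (g j * c j) • v j = 0 := by
    simpa [mul_smul] using hsum
  have := hv s (fun j => g j * c j) h0 i hi
  exact (mul_eq_zero.mp this).resolve_right (hc i)

/-- Let `k` be a PID and `M` a `k`-module with an exact sequence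
`k^A → k^B → M → 0` (`A`, `B` finite).  Then `A ≥ rel(M)` and `B ≥ gen(M)`. -/
theorem smith_bound (k : Type u) [CommRing k] [IsDomain k] [IsPrincipalIdealRing k]
    (M : Type u) [AddCommGroup M] [Module k M] (A B : ℕ)
    (f : (Fin A → k) →ₗ[k] (Fin B → k)) (g : (Fin B → k) →ₗ[k] M)
    (hfg : Function.Exact f g) (hg : Function.Surjective g) :
    mrel k M ≤ A ∧ mgen k M ≤ B := by
  have hgenB : mgen k M ≤ B := by
    apply Nat.sInf_le
    refine ⟨fun i => g (Pi.basisFun k (Fin B) i), ?_⟩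
    rw [show (Set.range fun i => g (Pi.basisFun k (Fin B) i))
        = g '' Set.range (Pi.basisFun k (Fin B)) from Set.range_comp g _,
      ← Submodule.map_span, (Pi.basisFun k (Fin B)).span_eq, Submodule.map_top,
      LinearMap.range_eq_top.mpr hg]
  refine ⟨?_, hgenB⟩
  -- preimage of torsion submodule
  set T : Submodule k (Fin B → k) := (Submodule.torsion k M).comap g with hTdef
  obtain ⟨t, bT⟩ := Submodule.basisOfPid (Pi.basisFun k (Fin B)) T
  -- restriction of g to T surjects onto the torsion submodule
  have hrestr : ∀ x ∈ T, g x ∈ Submodule.torsion k M := fun x hx => hx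
  set h : T →ₗ[k] Submodule.torsion k M := g.restrict hrestr with hhdef
  have hhsurj : Function.Surjective h := by
    rintro ⟨m, hm⟩
    obtain ⟨x, rfl⟩ := hg m
    exact ⟨⟨x, hm⟩, rfl⟩
  have h1 : mrel k M ≤ t := by
    apply Nat.sInf_le
    refine ⟨fun i => h (bT i), ?_⟩
    rw [show (Set.range fun i => h (bT i)) = h '' Set.range bT from Set.range_comp h bT,
      ← Submodule.map_span, bT.span_eq, Submodule.map_top, LinearMap.range_eq_top.mpr hhsurj]
  -- now bound t by A
  have hker : LinearMap.ker g = LinearMap.range f := (LinearMap.exact_iff.mp hfg)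
  have hc : ∀ i : Fin t, ∃ c : k, c ≠ 0 ∧ c • (bT i : Fin B → k) ∈ LinearMap.range f := by
    intro i
    have hmem : g (bT i : Fin B → k) ∈ Submodule.torsion k M := (bT i).2
    obtain ⟨a, ha⟩ := (Submodule.mem_torsion_iff _).mp hmem
    refine ⟨(a : k), nonZeroDivisors.coe_ne_zero a, ?_⟩
    rw [← hker, LinearMap.mem_ker, map_smul]
    exact ha
  choose c hc0 hcf using hc
  -- the scaled basis vectors are linearly independent
  have hliT : LinearIndependent k (fun i : Fin t => (bT i : Fin B → k)) :=
    bT.linearIndependent.map' T.subtype T.ker_subtype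
  have hli2 : LinearIndependent k (fun i : Fin t => c i • (bT i : Fin B → k)) :=
    smul_linearIndependent hliT c hc0
  -- lift them to the range of f
  have hli3 : LinearIndependent k (fun i : Fin t =>
      (⟨c i • (bT i : Fin B → k), hcf i⟩ : LinearMap.range f)) := by
    apply LinearIndependent.of_comp (LinearMap.range f).subtype
    exact hli2
  have h2 : (t : Cardinal) ≤ (A : Cardinal) := by
    have e1 := hli3.cardinal_lift_le_rank
    have e2 := rank_range_le f
    have e3 : Module.rank k (Fin A → k) = A := rank_fin_fun A
    rw [e3] at e2
    simp only [Cardinal.mk_fin, Cardinal.lift_natCast] at e1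
    calc (t : Cardinal) ≤ Cardinal.lift.{0} (Module.rank k (LinearMap.range f)) := by
            simpa using e1
      _ ≤ (A : Cardinal) := by simpa using e2
  exact h1.trans (by exact_mod_cast h2)
end

section
/- Let k be a principal ideal domain and A a connected ℕ-graded k-algebra. Suppose A is generated as a k-algebra by a family of homogeneous elements of positive degree containing exactly N_n elements of degree n for each n ≥ 1, and suppose each graded component (I(A)/I(A)²)_n is a finitely generated k-module. Then N_n ≥ gen((I(A)/I(A)²)_n) for every n ≥ 1. -/
universe u v

/-- Let `k` be a PID and `A` a connected `ℕ`-graded `k`-algebra generated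
by a family of homogeneous elements of positive degree with exactly `Nn n` elements of
degree `n`, and suppose each graded component `(I/I²)ₙ` (the image of `Aₙ` in `A/I²`) is a
finitely generated `k`-module.  Then `Nn n ≥ gen((I/I²)ₙ)` for every `n ≥ 1`. -/
theorem generator_lower_bound (k A : Type u) [CommRing k] [IsDomain k]
    [IsPrincipalIdealRing k] [Ring A] [Algebra k A]
    (𝒜 : ℕ → Submodule k A) [GradedAlgebra 𝒜]
    (hconn : 𝒜 0 = (1 : Submodule k A))
    (Nn : ℕ → ℕ) (x : (n : ℕ) → Fin (Nn n) → A)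
    (hmem : ∀ n i, x n i ∈ 𝒜 n)
    (hgen : Algebra.adjoin k {a : A | ∃ (n : ℕ) (_ : 0 < n) (i : Fin (Nn n)), a = x n i} = ⊤)
    (I : Submodule k A) (hI : I = ⨆ (n : ℕ) (_ : 0 < n), 𝒜 n)
    (hfg : ∀ n : ℕ, 0 < n → (Submodule.map (I * I).mkQ (𝒜 n)).FG) :
    ∀ n : ℕ, 0 < n → mgen k ↥(Submodule.map (I * I).mkQ (𝒜 n)) ≤ Nn n := by
  intro n hn
  set S : Set A := {a : A | ∃ (n : ℕ) (_ : 0 < n) (i : Fin (Nn n)), a = x n i} with hS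
  have hAI : ∀ m, 0 < m → 𝒜 m ≤ I := fun m hm => by
    rw [hI]; exact le_iSup_of_le m (le_iSup_of_le hm le_rfl)
  have hSI : S ⊆ (I : Set A) := by
    rintro a ⟨m, hm, i, rfl⟩
    exact hAI m hm (hmem m i)
  -- I * I ≤ I
  have step1 : ∀ q, 0 < q → ∀ b ∈ 𝒜 q, I ≤ Submodule.comap (LinearMap.mulRight k b) I := by
    intro q hq b hb
    refine hI.le.trans (iSup_le fun p => iSup_le fun hp a ha => ?_)
    exact hAI (p + q) (Nat.add_pos_left hp q) (SetLike.mul_mem_graded ha hb)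
  have hII : I * I ≤ I := by
    rw [Submodule.mul_le]
    intro a ha b hb
    have : I ≤ Submodule.comap (LinearMap.mulLeft k a) I := by
      refine hI.le.trans (iSup_le fun q => iSup_le fun hq b' hb' => ?_)
      exact step1 q hq b' hb' ha
    exact this hb
  -- projection
  set π : A →ₗ[k] A := GradedAlgebra.proj 𝒜 n with hπ
  have hproj_hom : ∀ p q (a : A), a ∈ 𝒜 p → ∀ b ∈ 𝒜 q, π (a * b) ∈ (𝒜 p * 𝒜 q : Submodule k A) := by
    intro p q a ha b hb
    have hab : a * b ∈ 𝒜 (p + q) := SetLike.mul_mem_graded ha hb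
    rw [hπ, GradedAlgebra.proj_apply]
    by_cases h : p + q = n
    · rw [DirectSum.decompose_of_mem_same 𝒜 (h ▸ hab)]
      exact Submodule.mul_mem_mul ha hb
    · rw [DirectSum.decompose_of_mem_ne 𝒜 hab h]
      exact zero_mem _
  have hproj_II : I * I ≤ Submodule.comap π (I * I) := by
    rw [Submodule.mul_le]
    intro a ha b hb
    have s1 : ∀ p, 0 < p → ∀ a' ∈ 𝒜 p,
        I ≤ Submodule.comap (LinearMap.mulLeft k a') (Submodule.comap π (I * I)) := by
      intro p hp a' ha'
      refine hI.le.trans (iSup_le fun q => iSup_le fun hq b' hb' => ?_)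
      have := hproj_hom p q a' ha' b' hb'
      exact mul_le_mul' (hAI p hp) (hAI q hq) this
    have s2 : I ≤ Submodule.comap (LinearMap.mulRight k b) (Submodule.comap π (I * I)) := by
      refine hI.le.trans (iSup_le fun p => iSup_le fun hp a' ha' => ?_)
      exact s1 p hp a' ha' hb
    exact s2 ha
  -- the big span
  set P : Submodule k A := Submodule.span k ({1} ∪ S) with hP
  set T : Submodule k A := P ⊔ I * I with hT
  have hPle : P ≤ 1 ⊔ I := by
    rw [hP, Submodule.span_le]
    rintro a (rfl | haS)
    · exact Submodule.mem_sup_left (Submodule.one_le.mp le_rfl)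
    · exact Submodule.mem_sup_right (hSI haS)
  have hPP : P * P ≤ T := by
    rw [hP, Submodule.span_mul_span, Submodule.span_le]
    rintro c ⟨u, hu, v, hv, rfl⟩
    show u * v ∈ T
    rcases hu with rfl | hu <;> rcases hv with rfl | hv
    · rw [one_mul]; exact Submodule.mem_sup_left (Submodule.subset_span (Or.inl rfl))
    · rw [one_mul]; exact Submodule.mem_sup_left (Submodule.subset_span (Or.inr hv))
    · rw [mul_one]; exact Submodule.mem_sup_left (Submodule.subset_span (Or.inr hu))
    · exact Submodule.mem_sup_right (Submodule.mul_mem_mul (hSI hu) (hSI hv))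
  have hIII : I * (I * I) ≤ I * I := by
    rw [← mul_assoc]
    exact mul_le_mul' hII le_rfl
  have hIII' : (I * I) * I ≤ I * I := mul_le_mul' hII le_rfl
  have hPII : P * (I * I) ≤ I * I := by
    calc P * (I * I) ≤ (1 ⊔ I) * (I * I) := mul_le_mul' hPle le_rfl
    _ = 1 * (I * I) ⊔ I * (I * I) := Submodule.sup_mul _ _ _
    _ ≤ I * I := sup_le (by rw [one_mul]) hIII
  have hIIP : (I * I) * P ≤ I * I := by
    calc (I * I) * P ≤ (I * I) * (1 ⊔ I) := mul_le_mul' le_rfl hPle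
    _ = (I * I) * 1 ⊔ (I * I) * I := Submodule.mul_sup _ _ _
    _ ≤ I * I := sup_le (by rw [mul_one]) hIII'
  have hTT : T * T ≤ T := by
    rw [hT, Submodule.sup_mul, Submodule.mul_sup, Submodule.mul_sup]
    refine sup_le (sup_le hPP (le_sup_right.trans' hPII)) (sup_le ?_ ?_)
    · exact le_sup_right.trans' hIIP
    · refine le_sup_right.trans' ?_
      exact (mul_le_mul' hII le_rfl).trans hIII
  have htop : ∀ a : A, a ∈ T := by
    have hspan : (⊤ : Submodule k A) = Submodule.span k (Submonoid.closure S : Set A) := by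
      rw [← Algebra.adjoin_eq_span, hgen]; rfl
    intro a
    have ha : a ∈ Submodule.span k (Submonoid.closure S : Set A) := by
      rw [← hspan]; trivial
    refine Submodule.span_le.mpr ?_ ha
    intro c hc
    induction hc using Submonoid.closure_induction with
    | mem c hcS => exact Submodule.mem_sup_left (Submodule.subset_span (Or.inr hcS))
    | one => exact Submodule.mem_sup_left (Submodule.subset_span (Or.inl rfl))
    | mul a b _ _ ha hb => exact hTT (Submodule.mul_mem_mul ha hb)
  -- image of 𝒜 n in the quotient is spanned by the x n i
  have key : Submodule.map (I * I).mkQ (𝒜 n) ≤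
      Submodule.span k (Set.range fun i => (I * I).mkQ (x n i)) := by
    rintro _ ⟨a, ha, rfl⟩
    obtain ⟨u, hu, v, hv, huv⟩ := Submodule.mem_sup.mp (htop a)
    have hπa : π a = a := by
      rw [hπ, GradedAlgebra.proj_apply, DirectSum.decompose_of_mem_same 𝒜 ha]
    have hπu : π u ∈ Submodule.span k (Set.range (x n)) := by
      have : π u ∈ Submodule.map π P := ⟨u, hu, rfl⟩
      rw [hP, Submodule.map_span] at this
      refine Submodule.span_le.mpr ?_ this
      rintro _ ⟨c, (rfl | ⟨m, hm, i, rfl⟩), rfl⟩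
      · have h1 : (1 : A) ∈ 𝒜 0 := SetLike.one_mem_graded 𝒜
        rw [hπ, GradedAlgebra.proj_apply, DirectSum.decompose_of_mem_ne 𝒜 h1 hn.ne]
        exact zero_mem _
      · by_cases h : m = n
        · subst h
          rw [hπ, GradedAlgebra.proj_apply, DirectSum.decompose_of_mem_same 𝒜 (hmem m i)]
          exact Submodule.subset_span ⟨i, rfl⟩
        · rw [hπ, GradedAlgebra.proj_apply, DirectSum.decompose_of_mem_ne 𝒜 (hmem m i) h]
          exact zero_mem _
    have hπv : π v ∈ I * I := hproj_II hv
    have ha' : a = π u + π v := by rw [← map_add, huv, hπa]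
    have : (I * I).mkQ a = (I * I).mkQ (π u) := by
      have h0 : (I * I).mkQ (π v) = 0 := (Submodule.Quotient.mk_eq_zero _).mpr hπv
      rw [ha', map_add, h0, add_zero]
    rw [this]
    have : (I * I).mkQ (π u) ∈ Submodule.map (I * I).mkQ (Submodule.span k (Set.range (x n))) :=
      ⟨π u, hπu, rfl⟩
    rwa [Submodule.map_span, ← Set.range_comp] at this
  -- conclude
  set Q := Submodule.map (I * I).mkQ (𝒜 n) with hQ
  have hxQ : ∀ i, (I * I).mkQ (x n i) ∈ Q := fun i => ⟨x n i, hmem n i, rfl⟩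
  set s : Fin (Nn n) → Q := fun i => ⟨(I * I).mkQ (x n i), hxQ i⟩ with hs
  have hstop : Submodule.span k (Set.range s) = ⊤ := by
    rw [eq_top_iff]
    rintro ⟨q, hq⟩ _
    have hq' : q ∈ Submodule.span k (Set.range fun i => (I * I).mkQ (x n i)) := key hq
    have himg : Q.subtype '' Set.range s = Set.range fun i => (I * I).mkQ (x n i) := by
      ext y
      constructor
      · rintro ⟨_, ⟨i, rfl⟩, rfl⟩; exact ⟨i, rfl⟩
      · rintro ⟨i, rfl⟩; exact ⟨s i, ⟨i, rfl⟩, rfl⟩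
    have : Q.subtype ⟨q, hq⟩ ∈ Submodule.map Q.subtype (Submodule.span k (Set.range s)) := by
      rw [Submodule.map_span, himg]; exact hq'
    obtain ⟨y, hy, heq⟩ := this
    have : y = ⟨q, hq⟩ := Subtype.ext heq
    exact this ▸ hy
  exact Nat.sInf_le ⟨s, hstop⟩
end

section
/- For every subset I ⊆ {1,…,m} and every homogeneous element x ∈ A_d, the following identity holds: û_I · x = Σ_{I = A ⊔ B} (−1)^{θ(A,B) + d·|B|} c(A,x)·û_B, where the sum runs over all ordered pairs of disjoint subsets A, B with A ∪ B = I. -/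
universe u

section GradedCommutators

variable {R : Type u} [Ring R] {m : ℕ}

/-- The sign `(−1)^z` as an element of the ring `R`, for `z : ℤ`. -/
def sgn (R : Type u) [Ring R] (z : ℤ) : R := (((-1 : Rˣ) ^ z : Rˣ) : R)

/-- The graded commutator `[a,b] = a·b − (−1)^{pq}·b·a` of elements `a`, `b` of degrees
`p`, `q`. -/
def gbrk (p q : ℤ) (a b : R) : R := a * b - sgn R (p * q) * (b * a)

/-- The iterated commutator `[u_{i₁},[u_{i₂},…,[u_{i_k},x]…]]` along a list `i₁,…,i_k`,
where the `u_i` have degree `1` and `x` has degree `d`. -/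
def cList (u : Fin m → R) (d : ℤ) (x : R) : List (Fin m) → R
  | [] => x
  | i :: l => gbrk 1 (d + l.length) (u i) (cList u d x l)

/-- `c(I,x) = [u_{i₁},[u_{i₂},…,[u_{i_k},x]…]]` for `I = {i₁ < … < i_k}`,
where `x` has degree `d`. -/
def cNest (u : Fin m → R) (d : ℤ) (x : R) (I : Finset (Fin m)) : R :=
  cList u d x (I.sort (· ≤ ·))

/-- `û_I = u_{i₁} ⋯ u_{i_k}` for `I = {i₁ < … < i_k}`. -/
def uHat (u : Fin m → R) (I : Finset (Fin m)) : R :=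
  ((I.sort (· ≤ ·)).map u).prod

/-- The Koszul sign exponent `θ(A,B) = #{(a,b) ∈ A × B | a > b}`. -/
def theta (A B : Finset (Fin m)) : ℕ :=
  ((A ×ˢ B).filter fun p => p.2 < p.1).card

end GradedCommutators

section AuxLemmas

variable {R : Type u} [Ring R] {m : ℕ}

lemma sgn_add' (a b : ℤ) : sgn R (a + b) = sgn R a * sgn R b := by
  simp [sgn, zpow_add]

lemma sgn_one_or_neg_one (z : ℤ) : (sgn R z = 1) ∨ (sgn R z = -1) := by
  have h2 : ((-1 : Rˣ)) ^ (2 : ℤ) = 1 := by rw [zpow_two]; simp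
  rcases Int.even_or_odd z with ⟨c, hc⟩ | ⟨c, hc⟩
  · left; simp [sgn, hc, ← two_mul, zpow_mul, h2]
  · right
    have hz : z = 2*c + 1 := by omega
    simp [sgn, hz, zpow_add, zpow_mul, h2]

lemma sgn_comm (z : ℤ) (r : R) : sgn R z * r = r * sgn R z := by
  rcases sgn_one_or_neg_one (R := R) z with h | h <;> simp [h]

lemma step_term (e q : ℤ) (v c w : R) :
    v * (sgn R e * (c * w)) =
      sgn R e * (gbrk 1 q v c * w) + sgn R (e + q) * (c * (v * w)) := by
  have hc := sgn_comm (R := R) e v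
  calc v * (sgn R e * (c * w)) = sgn R e * (v * (c * w)) := by
        rw [← mul_assoc, ← hc, mul_assoc]
    _ = _ := by
        rw [gbrk, sgn_add', sub_mul, mul_sub]
        simp [mul_assoc, mul_add]

lemma uHat_insert_min (u : Fin m → R) {i : Fin m} {B : Finset (Fin m)}
    (h : ∀ j ∈ B, i < j) (hi : i ∉ B) :
    uHat u (insert i B) = u i * uHat u B := by
  unfold uHat
  rw [Finset.sort_insert (· ≤ ·) (fun b hb => (h b hb).le) hi]
  simp

lemma cNest_insert_min (u : Fin m → R) (d : ℤ) (x : R) {i : Fin m} {A : Finset (Fin m)}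
    (h : ∀ j ∈ A, i < j) (hi : i ∉ A) :
    cNest u d x (insert i A) = gbrk 1 (d + A.card) (u i) (cNest u d x A) := by
  unfold cNest
  rw [Finset.sort_insert (· ≤ ·) (fun b hb => (h b hb).le) hi]
  simp [cList, Finset.length_sort]

lemma theta_eq (A B : Finset (Fin m)) :
    theta A B = ∑ a ∈ A, (B.filter (· < a)).card := by
  unfold theta
  rw [Finset.card_filter, Finset.sum_product]
  exact Finset.sum_congr rfl fun a _ => (Finset.card_filter _ _).symm

lemma theta_insert_left {i : Fin m} {A B : Finset (Fin m)} (hi : i ∉ A)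
    (h : ∀ b ∈ B, i < b) : theta (insert i A) B = theta A B := by
  rw [theta_eq, theta_eq, Finset.sum_insert hi]
  have he : (B.filter (· < i)) = ∅ :=
    Finset.filter_eq_empty_iff.mpr (fun b hb => not_lt.mpr (h b hb).le)
  simp [he]

lemma theta_insert_right {i : Fin m} {A B : Finset (Fin m)} (hi : i ∉ B)
    (h : ∀ a ∈ A, i < a) : theta A (insert i B) = A.card + theta A B := by
  rw [theta_eq, theta_eq]
  have hstep : ∀ a ∈ A, ((insert i B).filter (· < a)).card
      = (B.filter (· < a)).card + 1 := by
    intro a ha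
    rw [Finset.filter_insert, if_pos (h a ha),
      Finset.card_insert_of_notMem (fun hmem => hi (Finset.mem_of_mem_filter _ hmem))]
  rw [Finset.sum_congr rfl hstep, Finset.sum_add_distrib]
  simp [add_comm]

end AuxLemmas

/-- `û_I · x = Σ_{I = A ⊔ B} (−1)^{θ(A,B) + d·|B|} c(A,x)·û_B` for every
`I ⊆ {1,…,m}` and every homogeneous `x` of degree `d`. -/
theorem uHat_mul_homogeneous {k R : Type u} [CommRing k] [Ring R] [Algebra k R] {m : ℕ}
    (𝒜 : ℤ → Submodule k R) [GradedAlgebra 𝒜]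
    (u : Fin m → R) (hu : ∀ i, u i ∈ 𝒜 1)
    (I : Finset (Fin m)) (d : ℤ) (x : R) (hx : x ∈ 𝒜 d) :
    uHat u I * x
      = ∑ A ∈ I.powerset,
          sgn R ((theta A (I \ A) : ℤ) + d * ((I \ A).card : ℤ))
            * (cNest u d x A * uHat u (I \ A)) := by
  clear hu hx
  induction I using Finset.induction_on_min with
  | empty => simp [uHat, cNest, cList, theta, sgn]
  | insert i J hmin ih =>
    have hiJ : i ∉ J := fun h => lt_irrefl i (hmin i h)
    have hdisj : Disjoint J.powerset (J.powerset.image (insert i)) := by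
      rw [Finset.disjoint_left]
      intro S hS hS'
      obtain ⟨T, hT, rfl⟩ := Finset.mem_image.mp hS'
      exact hiJ (Finset.mem_powerset.mp hS (Finset.mem_insert_self i T))
    have hinj : ∀ S ∈ J.powerset, ∀ T ∈ J.powerset, insert i S = insert i T → S = T := by
      intro S hS T hT h
      have hiS : i ∉ S := fun h' => hiJ (Finset.mem_powerset.mp hS h')
      have hiT : i ∉ T := fun h' => hiJ (Finset.mem_powerset.mp hT h')
      rw [← Finset.erase_insert hiS, ← Finset.erase_insert hiT, h]
    rw [uHat_insert_min u hmin hiJ, mul_assoc, ih, Finset.mul_sum,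
      Finset.powerset_insert, Finset.sum_union hdisj, Finset.sum_image hinj,
      ← Finset.sum_add_distrib]
    refine Finset.sum_congr rfl fun A hA => ?_
    have hAJ : A ⊆ J := Finset.mem_powerset.mp hA
    have hiA : i ∉ A := fun h => hiJ (hAJ h)
    have hminA : ∀ a ∈ A, i < a := fun a ha => hmin a (hAJ ha)
    have hminB : ∀ b ∈ J \ A, i < b := fun b hb => hmin b (Finset.mem_sdiff.mp hb).1
    have hiB : i ∉ J \ A := fun h => hiJ (Finset.mem_sdiff.mp h).1
    have h1 : insert i J \ insert i A = J \ A := by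
      rw [Finset.insert_sdiff_insert]
      ext b
      simp only [Finset.mem_sdiff, Finset.mem_insert, not_or]
      constructor
      · rintro ⟨hb, _, h2⟩; exact ⟨hb, h2⟩
      · rintro ⟨hb, h2⟩; exact ⟨hb, fun he => hiJ (he ▸ hb), h2⟩
    have h2 : insert i J \ A = insert i (J \ A) := Finset.insert_sdiff_of_notMem _ hiA
    rw [h1, h2, theta_insert_left hiA hminB, theta_insert_right hiB hminA,
      cNest_insert_min u d x hminA hiA, uHat_insert_min u hminB hiB,
      Finset.card_insert_of_notMem hiB,
      step_term ((theta A (J \ A) : ℤ) + d * ((J \ A).card : ℤ)) (d + (A.card : ℤ))]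
    rw [add_comm (sgn R _ * _)]
    congr 2
    · congr 1
      push_cast
      ring
end
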